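/- arXiv:1704.02575 — 2 statements merged into one kernel-verified Lean document; each statement's English description precedes it below -/
import Mathlib

section
/- If f : (0,∞) → ℝ is differentiable at x > 0 and α ∈ (0,1], then the conformable derivative (T_α f)(x) exists and equals x^(1-α)·f'(x). -/
open Real Filter

open Topology in
theorem HasDerivAt.tendsto_sub_div_of_comp_add_mul {𝕜 : Type*} [NontriviallyNormedField 𝕜]
    {f : 𝕜 → 𝕜} {f' x : 𝕜} (hf : HasDerivAt f f' x) (c : 𝕜) :
    Tendsto (fun ε => (f (x + ε * c) - f x) / ε) (𝓝[≠] 0) (𝓝 (c * f')) := by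
  have hline : HasDerivAt (fun ε : 𝕜 => x + ε * c) c 0 := by
    simpa using ((hasDerivAt_id (0 : 𝕜)).mul_const c).const_add x
  have hcomp : HasDerivAt (fun ε => f (x + ε * c)) (c * f') 0 := by
    rw [mul_comm c]
    exact (by simpa using hf : HasDerivAt f f' (x + 0 * c)).comp 0 hline
  simpa [div_eq_inv_mul] using hcomp.tendsto_slope_zero

theorem conformable_deriv_of_differentiable_general (α x : ℝ) (f f' : ℝ → ℝ)
    (hf : HasDerivAt f (f' x) x) :
    Tendsto (fun ε : ℝ => (f (x + ε * x ^ (1 - α)) - f x) / ε)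
      (nhdsWithin 0 {0}ᶜ) (nhds (x ^ (1 - α) * f' x)) :=
  hf.tendsto_sub_div_of_comp_add_mul _

/-- If `f` is differentiable at `x > 0` and `α ∈ (0,1]`, then the conformable
derivative `(T_α f)(x)` exists and equals `x^(1-α) * f'(x)`. -/
theorem conformable_deriv_of_differentiable (α x : ℝ) (f f' : ℝ → ℝ)
    (hα : 0 < α) (hα1 : α ≤ 1) (hx : 0 < x) (hf : HasDerivAt f (f' x) x) :
    Tendsto (fun ε : ℝ => (f (x + ε * x ^ (1 - α)) - f x) / ε)
      (nhdsWithin 0 {0}ᶜ) (nhds (x ^ (1 - α) * f' x)) :=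
  conformable_deriv_of_differentiable_general α x f f' hf
end

section
/- Let α ∈ (0,1]. The function u(x,t) = (x^α − t^α − α)/(t^α + 2α) satisfies the conformable nonlinear equation T_α^t u + (1 + u)·T_α^x u = 0 for all x, t > 0, with u(x,0⁺) → (x^α − α)/(2α) as t → 0⁺. -/
open Real Filter

/-- `u(x,t) = (x^α - t^α - α)/(t^α + 2α)` satisfies
`T_α^t u + (1+u) T_α^x u = 0` for `x, t > 0`, with `u(x,t) → (x^α-α)/(2α)` as `t → 0⁺`. -/
theorem conformable_nonlinear_solution (α : ℝ) (hα : 0 < α) (hα1 : α ≤ 1) :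
    (∀ x > (0 : ℝ), ∀ t > (0 : ℝ),
      (fun (u : ℝ → ℝ → ℝ) =>
        t ^ (1 - α) * deriv (fun s => u x s) t
          + (1 + u x t) * (x ^ (1 - α) * deriv (fun y => u y t) x) = 0)
      (fun x t => (x ^ α - t ^ α - α) / (t ^ α + 2 * α)))
    ∧ ∀ x > (0 : ℝ),
      Tendsto (fun t : ℝ => (x ^ α - t ^ α - α) / (t ^ α + 2 * α))
        (nhdsWithin 0 (Set.Ioi 0)) (nhds ((x ^ α - α) / (2 * α))) := by
  constructor
  · intro x hx t ht
    simp only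
    have hA : (0:ℝ) < t ^ α + 2 * α := by positivity
    have h1 : HasDerivAt (fun s : ℝ => s ^ α) (α * t ^ (α - 1)) t :=
      Real.hasDerivAt_rpow_const (Or.inl ht.ne')
    have hdt : HasDerivAt (fun s : ℝ => (x ^ α - s ^ α - α) / (s ^ α + 2 * α))
        ((-(α * t ^ (α - 1)) * (t ^ α + 2 * α) - (x ^ α - t ^ α - α) * (α * t ^ (α - 1)))
          / (t ^ α + 2 * α) ^ 2) t := by
      have hnum : HasDerivAt (fun s : ℝ => x ^ α - s ^ α - α) (-(α * t ^ (α - 1))) t := by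
        simpa using ((hasDerivAt_const t (x ^ α)).sub h1).sub_const α
      have hden : HasDerivAt (fun s : ℝ => s ^ α + 2 * α) (α * t ^ (α - 1)) t :=
        h1.add_const _
      exact hnum.div hden hA.ne'
    have hdx : HasDerivAt (fun y : ℝ => (y ^ α - t ^ α - α) / (t ^ α + 2 * α))
        ((α * x ^ (α - 1)) / (t ^ α + 2 * α)) x := by
      have h2 : HasDerivAt (fun y : ℝ => y ^ α) (α * x ^ (α - 1)) x :=
        Real.hasDerivAt_rpow_const (Or.inl hx.ne')
      exact ((h2.sub_const _).sub_const _).div_const _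
    rw [hdt.deriv, hdx.deriv]
    have hqt : t ^ (α - 1) = (t ^ (1 - α))⁻¹ := by
      rw [show α - 1 = -(1 - α) by ring, Real.rpow_neg ht.le]
    have hqx : x ^ (α - 1) = (x ^ (1 - α))⁻¹ := by
      rw [show α - 1 = -(1 - α) by ring, Real.rpow_neg hx.le]
    have hpt : (0:ℝ) < t ^ (1 - α) := Real.rpow_pos_of_pos ht _
    have hpx : (0:ℝ) < x ^ (1 - α) := Real.rpow_pos_of_pos hx _
    rw [hqt, hqx]
    field_simp
    ring
  · intro x hx
    have h0 : Tendsto (fun t : ℝ => t ^ α) (nhdsWithin 0 (Set.Ioi 0)) (nhds 0) := by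
      have := (Real.continuousAt_rpow_const 0 α (Or.inr hα.le)).tendsto
      simpa [Real.zero_rpow hα.ne'] using this.mono_left nhdsWithin_le_nhds
    have hne : (0:ℝ) + 2 * α ≠ 0 := by positivity
    have h1 : Tendsto (fun t : ℝ => (x ^ α - t ^ α - α) / (t ^ α + 2 * α))
        (nhdsWithin 0 (Set.Ioi 0)) (nhds ((x ^ α - 0 - α) / (0 + 2 * α))) :=
      ((tendsto_const_nhds.sub h0).sub tendsto_const_nhds).div
        (h0.add tendsto_const_nhds) hne
    simpa using h1
end
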